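/- Fix a time window [t_0, Λt_0] with t_0 > 0 and Λ > 1, quadrature nodes z_1,…,z_{N−1} ∈ ℂ with derivatives z'_1,…,z'_{N−1} ∈ ℂ, and a constant c > 0. For each j let û(z_j;μ) solve (z_j I − A(μ)) û(z_j;μ) = u_0(μ) + b̂(z_j;μ), let û_r(z_j;μ) ∈ ℂ^{N_h} be arbitrary approximations, and define the residuals r̂(z_j;μ) = (z_j I − A(μ)) û_r(z_j;μ) − u_0(μ) − b̂(z_j;μ). Define u(t;μ) = (c/(iN)) Σ_{j=1}^{N−1} e^{z_j t} û(z_j;μ) z'_j and u_r(t;μ) = (c/(iN)) Σ_{j=1}^{N−1} e^{z_j t} û_r(z_j;μ) z'_j. Then max_{t∈[t_0,Λt_0]} ‖u(t;μ) − u_r(t;μ)‖ ≤ Δ(μ), where Δ(μ) = (c/N) Σ_{j=1}^{N−1} e^{Re(z_j) t_j} |z'_j| ‖(z_j I − A(μ))^{-1}‖ ‖r̂(z_j;μ)‖, with t_j = Λt_0 if Re(z_j) ≥ 0 and t_j = t_0 if Re(z_j) < 0. -/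

import Mathlib

noncomputable def toES {𝕜 : Type*} [RCLike 𝕜] {n : ℕ} (v : Fin n → 𝕜) :
    EuclideanSpace 𝕜 (Fin n) := (WithLp.equiv 2 (Fin n → 𝕜)).symm v

noncomputable def fromES {𝕜 : Type*} [RCLike 𝕜] {n : ℕ} (v : EuclideanSpace 𝕜 (Fin n)) :
    Fin n → 𝕜 := WithLp.equiv 2 (Fin n → 𝕜) v

/-- Action of a matrix on Euclidean space. -/
noncomputable def mvES {𝕜 : Type*} [RCLike 𝕜] {n : ℕ} (M : Matrix (Fin n) (Fin n) 𝕜)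
    (v : EuclideanSpace 𝕜 (Fin n)) : EuclideanSpace 𝕜 (Fin n) := toES (M.mulVec (fromES v))

noncomputable def cvec {n : ℕ} (v : EuclideanSpace ℝ (Fin n)) : EuclideanSpace ℂ (Fin n) :=
  toES (fun i => Complex.ofReal (fromES v i))

def cmat {m n : ℕ} (M : Matrix (Fin m) (Fin n) ℝ) : Matrix (Fin m) (Fin n) ℂ :=
  M.map Complex.ofReal

/-- Spectral (operator) norm of a complex matrix. -/
noncomputable def specNorm {n : ℕ} (M : Matrix (Fin n) (Fin n) ℂ) : ℝ :=
  ‖Matrix.toEuclideanCLM (𝕜 := ℂ) M‖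

/-!
Both signals are the same quadrature sum, so their difference is the sum of
`e^{z_j t} z'_j (û_j - û_{r,j})`. Subtracting the two linear systems gives
`(z_j I - A)(û_{r,j} - û_j) = r̂_j`, hence `‖û_j - û_{r,j}‖ ≤ ‖(z_j I - A)⁻¹‖ ‖r̂_j‖`, and on the
window `|e^{z_j t}| = e^{Re(z_j) t}` is largest at the right end point if `Re(z_j) ≥ 0` and at the
left one otherwise. The triangle inequality finishes the proof.
-/

lemma mvES_eq_toEuclideanCLM {𝕜 : Type*} [RCLike 𝕜] {n : ℕ} (M : Matrix (Fin n) (Fin n) 𝕜)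
    (v : EuclideanSpace 𝕜 (Fin n)) : mvES M v = Matrix.toEuclideanCLM (𝕜 := 𝕜) M v :=
  rfl

lemma norm_mvES_le {n : ℕ} (M : Matrix (Fin n) (Fin n) ℂ) (v : EuclideanSpace ℂ (Fin n)) :
    ‖mvES M v‖ ≤ specNorm M * ‖v‖ :=
  (Matrix.toEuclideanCLM (𝕜 := ℂ) M).le_opNorm v

lemma norm_sub_le_specNorm_inv_mul {n : ℕ} {M : Matrix (Fin n) (Fin n) ℂ} (hM : IsUnit M)
    (u v : EuclideanSpace ℂ (Fin n)) :
    ‖u - v‖ ≤ specNorm M⁻¹ * ‖mvES M u - mvES M v‖ := by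
  have hinv : M⁻¹ * M = 1 := Matrix.nonsing_inv_mul M ((Matrix.isUnit_iff_isUnit_det M).mp hM)
  have hsolve : mvES M⁻¹ (mvES M u - mvES M v) = u - v := by
    simp only [mvES_eq_toEuclideanCLM]
    rw [← map_sub, ← mul_apply_eq_comp, ← map_mul, hinv, map_one, one_apply_eq_self]
  simpa only [hsolve] using norm_mvES_le M⁻¹ (mvES M u - mvES M v)

lemma norm_cexp_mul_ofReal_le {z : ℂ} {a b t : ℝ} (ht : t ∈ Set.Icc a b) :
    ‖Complex.exp (z * t)‖ ≤ Real.exp (z.re * if 0 ≤ z.re then b else a) := by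
  rw [Complex.norm_exp, Complex.re_mul_ofReal, Real.exp_le_exp]
  split_ifs with hz
  · exact mul_le_mul_of_nonneg_left ht.2 hz
  · exact mul_le_mul_of_nonpos_left ht.1 (not_le.mp hz).le

lemma norm_smul_sum_smul_sub_smul_sum_smul_le {ι 𝕜 E : Type*} [Fintype ι] [NormedField 𝕜]
    [SeminormedAddCommGroup E] [NormedSpace 𝕜 E] (a : 𝕜) (w : ι → 𝕜) (x y : ι → E) :
    ‖a • ∑ j, w j • x j - a • ∑ j, w j • y j‖ ≤ ‖a‖ * ∑ j, ‖w j‖ * ‖x j - y j‖ := by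
  calc ‖a • ∑ j, w j • x j - a • ∑ j, w j • y j‖ = ‖a‖ * ‖∑ j, w j • (x j - y j)‖ := by
        simp only [← smul_sub, ← Finset.sum_sub_distrib, norm_smul]
    _ ≤ ‖a‖ * ∑ j, ‖w j‖ * ‖x j - y j‖ := by
        gcongr
        exact (norm_sum_le _ _).trans_eq (by simp only [norm_smul])

lemma norm_ofReal_div_I_mul_natCast {c : ℝ} (hc : 0 ≤ c) (N : ℕ) :
    ‖(c : ℂ) / (Complex.I * N)‖ = c / N := by
  rw [norm_div, norm_mul, Complex.norm_I, Complex.norm_real, Complex.norm_natCast, one_mul,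
    Real.norm_of_nonneg hc]

theorem time_window_error_estimator_general
    (Nh N : ℕ) (t0 Λ : ℝ) (c : ℝ) (hc : 0 < c)
    (z z' : Fin (N - 1) → ℂ)
    (A : Matrix (Fin Nh) (Fin Nh) ℝ)
    (u0 : EuclideanSpace ℝ (Fin Nh))
    (bhat : Fin (N - 1) → EuclideanSpace ℂ (Fin Nh))
    -- invertibility of `z_j I - A(μ)`
    (hinv : ∀ j, IsUnit (z j • (1 : Matrix (Fin Nh) (Fin Nh) ℂ) - cmat A))
    (uhat uhatr : Fin (N - 1) → EuclideanSpace ℂ (Fin Nh))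
    -- `û(z_j;μ)` solves `(z_j I - A(μ)) û(z_j;μ) = u₀(μ) + b̂(z_j;μ)`
    (huhat : ∀ j, mvES (z j • (1 : Matrix (Fin Nh) (Fin Nh) ℂ) - cmat A) (uhat j)
      = cvec u0 + bhat j)
    -- residuals of the arbitrary approximations `û_r(z_j;μ)`
    (rhat : Fin (N - 1) → EuclideanSpace ℂ (Fin Nh))
    (hrhat : ∀ j, rhat j
      = mvES (z j • (1 : Matrix (Fin Nh) (Fin Nh) ℂ) - cmat A) (uhatr j) - cvec u0 - bhat j) :
    ∀ t ∈ Set.Icc t0 (Λ * t0),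
      ‖((c / (Complex.I * N)) • ∑ j, (Complex.exp (z j * t) * z' j) • uhat j)
        - ((c / (Complex.I * N)) • ∑ j, (Complex.exp (z j * t) * z' j) • uhatr j)‖
      ≤ (c / N) * ∑ j,
          Real.exp ((z j).re * (if 0 ≤ (z j).re then Λ * t0 else t0)) * ‖z' j‖ *
          specNorm ((z j • (1 : Matrix (Fin Nh) (Fin Nh) ℂ) - cmat A)⁻¹) * ‖rhat j‖ := by
  intro t ht
  have hresidual : ∀ j, mvES (z j • (1 : Matrix (Fin Nh) (Fin Nh) ℂ) - cmat A) (uhat j)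
      - mvES (z j • (1 : Matrix (Fin Nh) (Fin Nh) ℂ) - cmat A) (uhatr j) = -rhat j := by
    intro j
    rw [huhat, hrhat]
    abel
  refine (norm_smul_sum_smul_sub_smul_sum_smul_le _ _ _ _).trans ?_
  rw [norm_ofReal_div_I_mul_natCast hc.le]
  refine mul_le_mul_of_nonneg_left (Finset.sum_le_sum fun j _ => ?_) (by positivity)
  rw [norm_mul, mul_assoc _ (specNorm _)]
  have herror := norm_sub_le_specNorm_inv_mul (hinv j) (uhat j) (uhatr j)
  rw [hresidual, norm_neg] at herror
  exact mul_le_mul (mul_le_mul_of_nonneg_right (norm_cexp_mul_ofReal_le ht) (norm_nonneg _))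
    herror (norm_nonneg _) (by positivity)

/-- residual-based a posteriori error estimator on a time window:
`max_{t ∈ [t₀, Λt₀]} ‖u(t;μ) - u_r(t;μ)‖ ≤ Δ(μ)`. -/
theorem time_window_error_estimator
    (Nh N : ℕ) (t0 Λ : ℝ) (ht0 : 0 < t0) (hΛ : 1 < Λ) (c : ℝ) (hc : 0 < c)
    (z z' : Fin (N - 1) → ℂ)
    (A : Matrix (Fin Nh) (Fin Nh) ℝ)
    (u0 : EuclideanSpace ℝ (Fin Nh))
    (bhat : Fin (N - 1) → EuclideanSpace ℂ (Fin Nh))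
    -- invertibility of `z_j I - A(μ)`
    (hinv : ∀ j, IsUnit (z j • (1 : Matrix (Fin Nh) (Fin Nh) ℂ) - cmat A))
    (uhat uhatr : Fin (N - 1) → EuclideanSpace ℂ (Fin Nh))
    -- `û(z_j;μ)` solves `(z_j I - A(μ)) û(z_j;μ) = u₀(μ) + b̂(z_j;μ)`
    (huhat : ∀ j, mvES (z j • (1 : Matrix (Fin Nh) (Fin Nh) ℂ) - cmat A) (uhat j)
      = cvec u0 + bhat j)
    -- residuals of the arbitrary approximations `û_r(z_j;μ)`
    (rhat : Fin (N - 1) → EuclideanSpace ℂ (Fin Nh))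
    (hrhat : ∀ j, rhat j
      = mvES (z j • (1 : Matrix (Fin Nh) (Fin Nh) ℂ) - cmat A) (uhatr j) - cvec u0 - bhat j) :
    ∀ t ∈ Set.Icc t0 (Λ * t0),
      ‖((c / (Complex.I * N)) • ∑ j, (Complex.exp (z j * t) * z' j) • uhat j)
        - ((c / (Complex.I * N)) • ∑ j, (Complex.exp (z j * t) * z' j) • uhatr j)‖
      ≤ (c / N) * ∑ j,
          Real.exp ((z j).re * (if 0 ≤ (z j).re then Λ * t0 else t0)) * ‖z' j‖ *
          specNorm ((z j • (1 : Matrix (Fin Nh) (Fin Nh) ℂ) - cmat A)⁻¹) * ‖rhat j‖ :=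
  time_window_error_estimator_general Nh N t0 Λ c hc z z' A u0 bhat hinv uhat uhatr huhat rhat hrhat
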